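/- arXiv:math-ph/0010002 — 5 statements merged into one kernel-verified Lean document; each statement's English description precedes it below -/
import Mathlib

section
/- Let $A$ and $B$ be bounded operators on a Hilbert space. Then $e^{-B} A e^{B} - A - [A,B] = \int_0^1 \int_0^s e^{-s_1 B} [[A,B],B] e^{s_1 B} \, ds_1 \, ds$, and consequently $\|e^{-B} A e^{B} - A - [A,B]\| \leq \frac{1}{2} \|[[A,B],B]\| e^{2\|B\|}$. -/
/-!
The map `s ↦ e^{-sB} X e^{sB}` has derivative `s ↦ e^{-sB} [X,B] e^{sB}`. Applying the
fundamental theorem of calculus to it once with `X = A` and once with `X = [A,B]` gives the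
second-order Taylor formula with integral remainder. Since `‖e^{±sB}‖ ≤ e^{‖B‖}` for
`s ∈ [0,1]`, the integrand is bounded by `‖[[A,B],B]‖ e^{2‖B‖}`, and the simplex
`0 ≤ s₁ ≤ s ≤ 1` has area `1/2`.
-/

open NormedSpace intervalIntegral

section ExpConjugation

variable {𝔸 : Type*} [NormedRing 𝔸] [NormedAlgebra ℝ 𝔸]

-- Not `NormOneClass`: on the zero space, `‖(1 : H →L[ℂ] H)‖ = 0`.
theorem NormedSpace.norm_exp_le_exp_norm (h1 : ‖(1 : 𝔸)‖ ≤ 1) (x : 𝔸) :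
    ‖exp x‖ ≤ Real.exp ‖x‖ := by
  rw [exp_eq_tsum ℝ, Real.exp_eq_exp_ℝ, exp_eq_tsum ℝ]
  refine (norm_tsum_le_tsum_norm (norm_expSeries_summable' x)).trans <|
    (norm_expSeries_summable' x).tsum_le_tsum (fun n => ?_) (expSeries_summable' ‖x‖)
  rw [norm_smul, smul_eq_mul, Real.norm_of_nonneg (by positivity)]
  gcongr
  rcases n with _ | n
  · simpa using h1
  · exact norm_pow_le' x n.succ_pos

theorem norm_exp_neg_smul_mul_mul_exp_smul_le (h1 : ‖(1 : 𝔸)‖ ≤ 1) (B X : 𝔸) (s : ℝ) :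
    ‖exp (-(s • B)) * X * exp (s • B)‖ ≤ ‖X‖ * Real.exp (2 * (|s| * ‖B‖)) := by
  have hexp : ∀ Y : 𝔸, ‖Y‖ = |s| * ‖B‖ → ‖exp Y‖ ≤ Real.exp (|s| * ‖B‖) := fun Y hY =>
    hY ▸ norm_exp_le_exp_norm h1 Y
  calc ‖exp (-(s • B)) * X * exp (s • B)‖
      ≤ ‖exp (-(s • B))‖ * ‖X‖ * ‖exp (s • B)‖ := norm_mul₃_le
    _ ≤ Real.exp (|s| * ‖B‖) * ‖X‖ * Real.exp (|s| * ‖B‖) := by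
        gcongr <;> apply hexp <;> simp [norm_smul]
    _ = ‖X‖ * Real.exp (2 * (|s| * ‖B‖)) := by rw [two_mul, Real.exp_add]; ring

variable [CompleteSpace 𝔸]

theorem hasDerivAt_exp_neg_smul_mul_mul_exp_smul (B X : 𝔸) (s : ℝ) :
    HasDerivAt (fun s : ℝ => exp (-(s • B)) * X * exp (s • B))
      (exp (-(s • B)) * (X * B - B * X) * exp (s • B)) s := by
  have h := ((hasDerivAt_exp_smul_const (-B) s).mul_const X).mul
    (hasDerivAt_exp_smul_const' B s)
  simp only [smul_neg] at h
  exact h.congr_deriv (by noncomm_ring)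

theorem continuous_exp_neg_smul_mul_mul_exp_smul (B X : 𝔸) :
    Continuous fun s : ℝ => exp (-(s • B)) * X * exp (s • B) :=
  continuous_iff_continuousAt.2 fun s =>
    (hasDerivAt_exp_neg_smul_mul_mul_exp_smul B X s).continuousAt

theorem exp_neg_smul_mul_mul_exp_smul_sub_eq_integral (B X : 𝔸) (t : ℝ) :
    exp (-(t • B)) * X * exp (t • B) - X =
      ∫ s in (0 : ℝ)..t, exp (-(s • B)) * (X * B - B * X) * exp (s • B) := by
  rw [integral_eq_sub_of_hasDerivAt
    (fun s _ => hasDerivAt_exp_neg_smul_mul_mul_exp_smul B X s)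
    ((continuous_exp_neg_smul_mul_mul_exp_smul B _).intervalIntegrable 0 t)]
  simp

theorem exp_neg_smul_mul_mul_exp_smul_sub_sub_smul_eq_integral_integral (A B : 𝔸) (t : ℝ) :
    exp (-(t • B)) * A * exp (t • B) - A - t • (A * B - B * A) =
      ∫ s in (0 : ℝ)..t, ∫ s₁ in (0 : ℝ)..s,
        exp (-(s₁ • B)) * ((A * B - B * A) * B - B * (A * B - B * A)) * exp (s₁ • B) := by
  simp_rw [← exp_neg_smul_mul_mul_exp_smul_sub_eq_integral]
  rw [integral_sub ((continuous_exp_neg_smul_mul_mul_exp_smul B _).intervalIntegrable 0 t)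
    intervalIntegrable_const, exp_neg_smul_mul_mul_exp_smul_sub_eq_integral, integral_const,
    sub_zero]

end ExpConjugation

theorem norm_integral_integral_le_of_norm_le_const {E : Type*} [NormedAddCommGroup E]
    [NormedSpace ℝ E] {f : ℝ → E} {M t : ℝ} (ht : 0 ≤ t) (hf : ∀ s ∈ Set.Icc 0 t, ‖f s‖ ≤ M) :
    ‖∫ s in (0 : ℝ)..t, ∫ s₁ in (0 : ℝ)..s, f s₁‖ ≤ M * t ^ 2 / 2 := by
  have hinner : ∀ s ∈ Set.Ioc 0 t, ‖∫ s₁ in (0 : ℝ)..s, f s₁‖ ≤ M * s := by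
    intro s hs
    refine (norm_integral_le_of_norm_le_const fun x hx => hf x ?_).trans_eq ?_
    · rw [Set.uIoc_of_le hs.1.le] at hx
      exact ⟨hx.1.le, hx.2.trans hs.2⟩
    · rw [sub_zero, abs_of_pos hs.1]
  refine (norm_integral_le_of_norm_le ht (MeasureTheory.ae_of_all _ hinner)
    ((continuous_const_mul M).intervalIntegrable 0 t)).trans_eq ?_
  rw [integral_const_mul, integral_id]
  ring

/-- Taylor formula with integral remainder for conjugation:
`e^{-B} A e^{B} - A - [A,B] = ∫₀¹∫₀ˢ e^{-s₁B} [[A,B],B] e^{s₁B} ds₁ ds`, and the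
resulting bound `‖e^{-B} A e^{B} - A - [A,B]‖ ≤ (1/2) ‖[[A,B],B]‖ e^{2‖B‖}`. -/
theorem stmt_4 {H : Type*} [NormedAddCommGroup H] [InnerProductSpace ℂ H] [CompleteSpace H]
    (A B : H →L[ℂ] H) :
    exp (-B) * A * exp B - A - (A * B - B * A) =
      ∫ s in (0:ℝ)..1, ∫ s₁ in (0:ℝ)..s,
        exp (-(s₁ • B)) * ((A * B - B * A) * B - B * (A * B - B * A)) * exp (s₁ • B) ∧
    ‖exp (-B) * A * exp B - A - (A * B - B * A)‖ ≤
      (1 / 2) * ‖(A * B - B * A) * B - B * (A * B - B * A)‖ * Real.exp (2 * ‖B‖) := by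
  have hexpansion := exp_neg_smul_mul_mul_exp_smul_sub_sub_smul_eq_integral_integral A B 1
  simp only [one_smul] at hexpansion
  set D := (A * B - B * A) * B - B * (A * B - B * A)
  have hbound : ∀ s ∈ Set.Icc (0 : ℝ) 1,
      ‖exp (-(s • B)) * D * exp (s • B)‖ ≤ ‖D‖ * Real.exp (2 * ‖B‖) := by
    intro s hs
    refine (norm_exp_neg_smul_mul_mul_exp_smul_le ContinuousLinearMap.norm_id_le B D s).trans ?_
    rw [abs_of_nonneg hs.1]
    gcongr
    exact mul_le_of_le_one_left (norm_nonneg B) hs.2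
  refine ⟨hexpansion, hexpansion ▸ ?_⟩
  exact (norm_integral_integral_le_of_norm_le_const zero_le_one hbound).trans_eq (by ring)
end

section
/- Let $d > 1$ and $C > 0$. There exists a constant $C' > 0$ such that for every $L \geq 1$, the number of pairs of positive integers $(i,j)$ with $i \neq j$ and $|i^d - j^d| \leq L$ is at most $C' L^{2/(d-1)}$. -/
/-!
If `1 ≤ i < j` and `j ^ d - i ^ d ≤ L`, then by Bernoulli's inequality
`(j - 1) ^ (d - 1) ≤ j ^ d - (j - 1) ^ d ≤ L`, so
`j ≤ 1 + L ^ (1 / (d - 1)) ≤ 2 L ^ (1 / (d - 1))`.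
All pairs therefore lie in a square of side `2 L ^ (1 / (d - 1))`, which has at most
`4 L ^ (2 / (d - 1))` lattice points.
-/

open Real

lemma rpow_sub_one_le_add_one_rpow_sub_rpow {y d : ℝ} (hy : 0 < y) (hd : 1 ≤ d) :
    y ^ (d - 1) ≤ (y + 1) ^ d - y ^ d := by
  have bernoulli : 1 + d * y⁻¹ ≤ (1 + y⁻¹) ^ d :=
    one_add_mul_self_le_rpow_one_add (by linarith [inv_pos.mpr hy]) hd
  have split : (y + 1) ^ d = y ^ d * (1 + y⁻¹) ^ d := by
    rw [← mul_rpow hy.le (by positivity)]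
    field_simp
  have peel : y ^ d = y ^ (d - 1) * y := by
    rw [← rpow_add_one hy.ne', sub_add_cancel]
  have hyd : 0 < y ^ (d - 1) := rpow_pos_of_pos hy _
  calc y ^ (d - 1) ≤ d * y ^ (d - 1) := le_mul_of_one_le_left hyd.le hd
    _ = y ^ d * (1 + d * y⁻¹) - y ^ d := by rw [peel]; field_simp; ring
    _ ≤ y ^ d * (1 + y⁻¹) ^ d - y ^ d := by gcongr
    _ = (y + 1) ^ d - y ^ d := by rw [split]

lemma le_rpow_inv_of_add_one_rpow_sub_rpow_le {x y d L : ℝ} (hx : 0 < x) (hxy : x ≤ y)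
    (hd : 1 < d) (h : (y + 1) ^ d - x ^ d ≤ L) : y ≤ L ^ (d - 1)⁻¹ := by
  have hy : 0 < y := hx.trans_le hxy
  have hL : y ^ (d - 1) ≤ L := calc
    y ^ (d - 1) ≤ (y + 1) ^ d - y ^ d := rpow_sub_one_le_add_one_rpow_sub_rpow hy hd.le
    _ ≤ (y + 1) ^ d - x ^ d := by gcongr
    _ ≤ L := h
  exact (le_rpow_inv_iff_of_pos hy.le ((rpow_pos_of_pos hy _).le.trans hL)
    (by linarith)).mpr hL

lemma natCast_le_two_mul_rpow_inv {i j : ℕ} {d L : ℝ} (hi : 0 < i) (hij : i < j) (hd : 1 < d)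
    (hL : 1 ≤ L) (h : (j : ℝ) ^ d - (i : ℝ) ^ d ≤ L) : (j : ℝ) ≤ 2 * L ^ (d - 1)⁻¹ := by
  have hij' : (i : ℝ) ≤ (j : ℝ) - 1 := by
    have : i + 1 ≤ j := hij
    exact le_sub_iff_add_le.mpr (by exact_mod_cast this)
  have hj := le_rpow_inv_of_add_one_rpow_sub_rpow_le (L := L) (by exact_mod_cast hi) hij' hd
    (by rwa [sub_add_cancel])
  have hone : 1 ≤ L ^ (d - 1)⁻¹ := one_le_rpow hL (inv_nonneg.mpr (by linarith))
  linarith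

lemma natCast_le_two_mul_rpow_inv_of_abs_rpow_sub_rpow_le {i j : ℕ} {d L : ℝ} (hi : 0 < i)
    (hj : 0 < j) (hij : i ≠ j) (hd : 1 < d) (hL : 1 ≤ L)
    (h : |(i : ℝ) ^ d - (j : ℝ) ^ d| ≤ L) :
    (i : ℝ) ≤ 2 * L ^ (d - 1)⁻¹ ∧ (j : ℝ) ≤ 2 * L ^ (d - 1)⁻¹ := by
  wlog hlt : i < j generalizing i j
  · exact (this hj hi hij.symm (by rwa [abs_sub_comm])
      ((Ne.symm hij).lt_of_le (not_lt.mp hlt))).symm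
  have hjB := natCast_le_two_mul_rpow_inv hi hlt hd hL (by linarith [(abs_le.mp h).1])
  exact ⟨(Nat.cast_le.mpr hlt.le).trans hjB, hjB⟩

lemma finite_and_ncard_le_sq_of_subset_square {S : Set (ℕ × ℕ)} {B : ℝ} (hB : 0 ≤ B)
    (hS : ∀ p ∈ S, 1 ≤ p.1 ∧ 1 ≤ p.2 ∧ (p.1 : ℝ) ≤ B ∧ (p.2 : ℝ) ≤ B) :
    S.Finite ∧ (S.ncard : ℝ) ≤ B ^ 2 := by
  set N := ⌊B⌋₊
  have hsub : S ⊆ ↑(Finset.Icc 1 N ×ˢ Finset.Icc 1 N) := by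
    intro p hp
    obtain ⟨h1, h2, h1B, h2B⟩ := hS p hp
    simp only [Finset.coe_product, Set.mem_prod, Finset.mem_coe, Finset.mem_Icc]
    exact ⟨⟨h1, Nat.le_floor h1B⟩, ⟨h2, Nat.le_floor h2B⟩⟩
  refine ⟨(Finset.finite_toSet _).subset hsub, ?_⟩
  have hcard : S.ncard ≤ N ^ 2 := by
    calc S.ncard ≤ (Finset.Icc 1 N ×ˢ Finset.Icc 1 N).card := by
          rw [← Set.ncard_coe_finset]; exact Set.ncard_le_ncard hsub (Finset.finite_toSet _)
      _ = N ^ 2 := by rw [Finset.card_product, Nat.card_Icc, add_tsub_cancel_right, sq]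
  calc (S.ncard : ℝ) ≤ (N : ℝ) ^ 2 := by exact_mod_cast hcard
    _ ≤ B ^ 2 := by gcongr; exact Nat.floor_le hB

/-- Counting bound: for `d > 1` there is `C' > 0` such that for every `L ≥ 1` the set of
pairs of distinct positive integers `(i,j)` with `|i^d - j^d| ≤ L` is finite with
cardinality at most `C' L^{2/(d-1)}`. -/
theorem stmt_7 (d : ℝ) (hd : 1 < d) :
    ∃ C' : ℝ, 0 < C' ∧ ∀ L : ℝ, 1 ≤ L →
      (let S := {p : ℕ × ℕ | 1 ≤ p.1 ∧ 1 ≤ p.2 ∧ p.1 ≠ p.2 ∧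
        |(p.1 : ℝ) ^ d - (p.2 : ℝ) ^ d| ≤ L};
      S.Finite ∧ (S.ncard : ℝ) ≤ C' * L ^ (2 / (d - 1))) := by
  refine ⟨4, by norm_num, fun L hL => ?_⟩
  have hside : (2 * L ^ (d - 1)⁻¹) ^ 2 = 4 * L ^ (2 / (d - 1)) := by
    rw [mul_pow, ← rpow_mul_natCast (by linarith)]
    norm_num [div_eq_mul_inv, mul_comm]
  rw [← hside]
  refine finite_and_ncard_le_sq_of_subset_square (by positivity) ?_
  rintro ⟨i, j⟩ ⟨hi, hj, hij, h⟩
  exact ⟨hi, hj, natCast_le_two_mul_rpow_inv_of_abs_rpow_sub_rpow_le hi hj hij hd hL h⟩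
end

section
/- Fix $n \geq 1$, $d > 1$, and $\tau > n + 2/(d-1)$. Then for every $K \geq 1$, $\sum_{k \in \mathbb{Z}^n, |k| \geq K} \; \sum_{\substack{i \neq j \\ |i^d - j^d| \leq C|k|}} \frac{|i^d - j^d|}{(1 + |k|^\tau)|k|} \leq \frac{C''}{K^{d_4}}$ for some constants $C'' > 0$ and $d_4 > 0$ depending only on $n, d, \tau, C$. -/
/-!
Every summand is dominated by `K ^ (-d₄)` times a fixed summable product weight
`∏ₗ (1 + |kₗ|)^(-p) · (1 + i)^(-q) · (1 + j)^(-q)` with `p, q > 1`.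
For `i < j` one has `j^d - i^d ≥ j^(d-1) (j - i) ≥ j^(d-1)`, so the constraint
`|i^d - j^d| ≤ C s` (with `s = |k|` the ℓ¹ norm) forces `i, j ≤ M := (C s)^(1/(d-1))`; hence
`1 ≤ (2M)^(2q) (1+i)^(-q) (1+j)^(-q)` costs a factor `s^(2q/(d-1))`. Likewise
`1 + |kₗ| ≤ 2s` gives `1 ≤ (2s)^(n p) ∏ₗ (1 + |kₗ|)^(-p)`, and the summand itself is at
most `C s^(-τ)`. Since `τ > n + 2/(d-1)`, `q` and `p` can be taken so close to `1` that
`d₄ := τ - 2q/(d-1) - n p > 0`, and the leftover `s^(-d₄) ≤ K^(-d₄)`.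
-/

open Finset

lemma summable_one_add_nat_rpow_neg {q : ℝ} (hq : 1 < q) :
    Summable fun a : ℕ => (1 + (a : ℝ)) ^ (-q) :=
  ((summable_nat_add_iff 1).2 (Real.summable_nat_rpow.2 (neg_lt_neg hq))).congr fun a => by
    push_cast; ring_nf

lemma summable_one_add_abs_int_rpow_neg {p : ℝ} (hp : 1 < p) :
    Summable fun m : ℤ => (1 + |(m : ℝ)|) ^ (-p) :=
  .of_nat_of_neg (by simpa using summable_one_add_nat_rpow_neg hp)
    (by simpa using summable_one_add_nat_rpow_neg hp)

lemma summable_prod_pi_of_nonneg {ι : Type*} [Fintype ι] {κ : ι → Type*}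
    {w : ∀ i, κ i → ℝ} (hw0 : ∀ i m, 0 ≤ w i m) (hw : ∀ i, Summable (w i)) :
    Summable fun x : (∀ i, κ i) => ∏ i, w i (x i) := by
  classical
  refine summable_of_sum_le (c := ∏ i, ∑' m, w i m)
    (fun x => prod_nonneg fun i _ => hw0 i (x i)) fun s => ?_
  calc ∑ x ∈ s, ∏ i, w i (x i)
      ≤ ∑ x ∈ Fintype.piFinset fun i => s.image (· i), ∏ i, w i (x i) :=
        sum_le_sum_of_subset_of_nonneg
          (fun x hx => Fintype.mem_piFinset.2 fun i => mem_image_of_mem _ hx)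
          fun x _ _ => prod_nonneg fun i _ => hw0 i (x i)
    _ = ∏ i, ∑ m ∈ s.image (· i), w i m := (prod_univ_sum _ _).symm
    _ ≤ ∏ i, ∑' m, w i m :=
        prod_le_prod (fun i _ => sum_nonneg fun m _ => hw0 i m)
          fun i _ => (hw i).sum_le_tsum _ fun m _ => hw0 i m

lemma rpow_sub_one_le_rpow_sub_rpow {a b d : ℝ} (ha : 0 ≤ a) (hab : a + 1 ≤ b)
    (hd : 1 ≤ d) :
    b ^ (d - 1) ≤ b ^ d - a ^ d := by
  have hb : 0 ≤ b := by linarith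
  have hd' : d - 1 + 1 ≠ 0 := (by linarith : (0 : ℝ) < d - 1 + 1).ne'
  have hpow : a ^ (d - 1) ≤ b ^ (d - 1) := Real.rpow_le_rpow ha (by linarith) (by linarith)
  rw [← sub_add_cancel d 1, Real.rpow_add_one' hb hd', Real.rpow_add_one' ha hd', sub_add_cancel]
  nlinarith [mul_nonneg (Real.rpow_nonneg hb (d - 1)) (sub_nonneg.2 hab),
    mul_nonneg (sub_nonneg.2 hpow) ha]

lemma natCast_max_le_rpow_of_abs_rpow_sub_rpow_le {d L : ℝ} (hd : 1 < d) {i j : ℕ}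
    (hij : i ≠ j) (h : |(i : ℝ) ^ d - (j : ℝ) ^ d| ≤ L) :
    ((max i j : ℕ) : ℝ) ≤ L ^ (d - 1)⁻¹ := by
  wlog hlt : i < j generalizing i j
  · rw [max_comm]
    exact this hij.symm (by rwa [abs_sub_comm]) (by omega)
  have hgap := rpow_sub_one_le_rpow_sub_rpow (Nat.cast_nonneg i)
    (by exact_mod_cast (hlt : i + 1 ≤ j) : (i : ℝ) + 1 ≤ j) hd.le
  have hj : 0 ≤ (j : ℝ) ^ (d - 1) := Real.rpow_nonneg (Nat.cast_nonneg j) _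
  rw [abs_sub_comm, abs_of_nonneg (by linarith)] at h
  rw [max_eq_right hlt.le, Real.le_rpow_inv_iff_of_pos (Nat.cast_nonneg j) (by linarith)
    (by linarith)]
  linarith

lemma one_le_rpow_mul_one_add_rpow_neg {x y q : ℝ} (hx : 0 ≤ x) (hxy : 1 + x ≤ y)
    (hq : 0 ≤ q) : 1 ≤ y ^ q * (1 + x) ^ (-q) := by
  have hx1 : 0 < 1 + x := by linarith
  rw [Real.rpow_neg hx1.le, ← div_eq_mul_inv, ← Real.div_rpow (by linarith) hx1.le]
  exact Real.one_le_rpow ((one_le_div hx1).2 hxy) hq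

lemma one_le_rpow_mul_pair_weight {d L q : ℝ} (hd : 1 < d) (hq : 0 ≤ q) {i j : ℕ}
    (hij : i ≠ j) (h : |(i : ℝ) ^ d - (j : ℝ) ^ d| ≤ L) :
    1 ≤ (2 * L ^ (d - 1)⁻¹) ^ (2 * q) * ((1 + (i : ℝ)) ^ (-q) * (1 + (j : ℝ)) ^ (-q)) := by
  have hmax := natCast_max_le_rpow_of_abs_rpow_sub_rpow_le hd hij h
  set M := L ^ (d - 1)⁻¹
  have hi : (i : ℝ) ≤ M := le_trans (by exact_mod_cast le_max_left i j) hmax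
  have hj : (j : ℝ) ≤ M := le_trans (by exact_mod_cast le_max_right i j) hmax
  have hM : 1 ≤ M := le_trans (by exact_mod_cast (by omega : 1 ≤ max i j)) hmax
  calc (1 : ℝ)
        ≤ ((2 * M) ^ q * (1 + (i : ℝ)) ^ (-q)) * ((2 * M) ^ q * (1 + (j : ℝ)) ^ (-q)) :=
        one_le_mul_of_one_le_of_one_le
          (one_le_rpow_mul_one_add_rpow_neg (Nat.cast_nonneg i) (by linarith) hq)
          (one_le_rpow_mul_one_add_rpow_neg (Nat.cast_nonneg j) (by linarith) hq)
    _ = _ := by rw [two_mul q, Real.rpow_add (by positivity)]; ring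

lemma one_le_rpow_mul_prod_weight {ι : Type*} [Fintype ι] {p : ℝ} (hp : 0 ≤ p)
    (k : ι → ℤ) (hk : 1 ≤ ((∑ l, |k l| : ℤ) : ℝ)) :
    1 ≤ (2 * ((∑ l, |k l| : ℤ) : ℝ)) ^ (Fintype.card ι * p) *
      ∏ l, (1 + |(k l : ℝ)|) ^ (-p) := by
  set s : ℝ := ((∑ l, |k l| : ℤ) : ℝ)
  have hks : ∀ l, 1 + |(k l : ℝ)| ≤ 2 * s := fun l => by
    have : |k l| ≤ ∑ m, |k m| := single_le_sum (fun m _ => abs_nonneg (k m)) (mem_univ l)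
    have : |(k l : ℝ)| ≤ s := by rw [← Int.cast_abs]; exact Int.cast_le.2 this
    linarith
  calc (1 : ℝ) ≤ ∏ l, (2 * s) ^ p * (1 + |(k l : ℝ)|) ^ (-p) :=
        one_le_prod fun l _ => one_le_rpow_mul_one_add_rpow_neg (abs_nonneg _) (hks l) hp
    _ = _ := by
      rw [prod_mul_distrib, prod_const, card_univ, ← Real.rpow_natCast,
        ← Real.rpow_mul (by positivity), mul_comm p]

lemma div_one_add_rpow_mul_le {a C s τ : ℝ} (hs : 0 < s) (ha : 0 ≤ a) (haC : a ≤ C * s) :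
    a / ((1 + s ^ τ) * s) ≤ C * s ^ (-τ) := by
  have hsτ : 0 < s ^ τ := Real.rpow_pos_of_pos hs τ
  calc a / ((1 + s ^ τ) * s) ≤ a / (s ^ τ * s) :=
        div_le_div_of_nonneg_left ha (by positivity) (by gcongr; linarith)
    _ ≤ C * s / (s ^ τ * s) := by gcongr
    _ = C * s ^ (-τ) := by rw [Real.rpow_neg hs.le]; field_simp

section TailSum

variable {ι : Type*} [Fintype ι]

noncomputable def tailSummand (d τ C K : ℝ) (x : (ι → ℤ) × (ℕ × ℕ)) : ℝ :=
  let knorm : ℝ := ((∑ l, |x.1 l| : ℤ) : ℝ)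
  if K ≤ knorm ∧ 1 ≤ x.2.1 ∧ 1 ≤ x.2.2 ∧ x.2.1 ≠ x.2.2 ∧
      |(x.2.1 : ℝ) ^ d - (x.2.2 : ℝ) ^ d| ≤ C * knorm then
    |(x.2.1 : ℝ) ^ d - (x.2.2 : ℝ) ^ d| / ((1 + knorm ^ τ) * knorm)
  else 0

noncomputable def tailWeight (p q : ℝ) (x : (ι → ℤ) × (ℕ × ℕ)) : ℝ :=
  (∏ l, (1 + |(x.1 l : ℝ)|) ^ (-p)) * ((1 + (x.2.1 : ℝ)) ^ (-q) * (1 + (x.2.2 : ℝ)) ^ (-q))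

lemma tailWeight_nonneg (p q : ℝ) (x : (ι → ℤ) × (ℕ × ℕ)) : 0 ≤ tailWeight p q x := by
  unfold tailWeight
  positivity

lemma summable_tailWeight {p q : ℝ} (hp : 1 < p) (hq : 1 < q) :
    Summable (tailWeight (ι := ι) p q) := by
  have hu0 : ∀ a : ℕ, 0 ≤ (1 + (a : ℝ)) ^ (-q) := fun a => by positivity
  have hk := summable_prod_pi_of_nonneg (fun _ (m : ℤ) => by positivity)
    fun (_ : ι) => summable_one_add_abs_int_rpow_neg hp
  have hij := (summable_one_add_nat_rpow_neg hq).mul_of_nonneg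
    (summable_one_add_nat_rpow_neg hq) hu0 hu0
  exact hk.mul_of_nonneg hij (fun _ => by positivity) fun _ => mul_nonneg (hu0 _) (hu0 _)

lemma tailSummand_nonneg {d τ C K : ℝ} (hK : 0 < K) (x : (ι → ℤ) × (ℕ × ℕ)) :
    0 ≤ tailSummand d τ C K x := by
  unfold tailSummand
  dsimp only
  split_ifs with hx
  · have : 0 < ((∑ l, |x.1 l| : ℤ) : ℝ) := hK.trans_le hx.1
    positivity
  · exact le_rfl

lemma tailSummand_le {d τ C K p q d₄ : ℝ} (hd : 1 < d) (hC : 0 < C) (hK : 1 ≤ K)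
    (hp : 0 ≤ p) (hq : 0 ≤ q) (hd₄ : 0 ≤ d₄)
    (hτ : τ = (d - 1)⁻¹ * (2 * q) + Fintype.card ι * p + d₄)
    (x : (ι → ℤ) × (ℕ × ℕ)) :
    tailSummand d τ C K x ≤
      C * (2 * C ^ (d - 1)⁻¹) ^ (2 * q) * 2 ^ (Fintype.card ι * p) * K ^ (-d₄) *
        tailWeight p q x := by
  obtain ⟨k, i, j⟩ := x
  unfold tailSummand tailWeight
  dsimp only
  split_ifs with hx
  · obtain ⟨hKs, -, -, hij, hL⟩ := hx
    set s : ℝ := ((∑ l, |k l| : ℤ) : ℝ)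
    set N : ℝ := Fintype.card ι * p
    set P : ℝ := (1 + (i : ℝ)) ^ (-q) * (1 + (j : ℝ)) ^ (-q)
    set W : ℝ := ∏ l, (1 + |(k l : ℝ)|) ^ (-p)
    have hs : 1 ≤ s := hK.trans hKs
    have hs0 : 0 < s := by linarith
    have hpair := one_le_rpow_mul_pair_weight hd hq hij hL
    have hlat := one_le_rpow_mul_prod_weight hp k hs
    have hpow : s ^ (-τ) * s ^ ((d - 1)⁻¹ * (2 * q)) * s ^ N = s ^ (-d₄) := by
      rw [← Real.rpow_add hs0, ← Real.rpow_add hs0, hτ]; ring_nf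
    have hsplit : (2 * (C * s) ^ (d - 1)⁻¹) ^ (2 * q) =
        (2 * C ^ (d - 1)⁻¹) ^ (2 * q) * s ^ ((d - 1)⁻¹ * (2 * q)) := by
      rw [Real.mul_rpow hC.le hs0.le, ← mul_assoc, Real.mul_rpow (by positivity) (by positivity),
        ← Real.rpow_mul hs0.le]
    calc |(i : ℝ) ^ d - (j : ℝ) ^ d| / ((1 + s ^ τ) * s) ≤ C * s ^ (-τ) :=
          div_one_add_rpow_mul_le hs0 (abs_nonneg _) hL
      _ ≤ C * s ^ (-τ) * ((2 * (C * s) ^ (d - 1)⁻¹) ^ (2 * q) * P) * ((2 * s) ^ N * W) := by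
          rw [mul_assoc]
          exact le_mul_of_one_le_right (by positivity) (one_le_mul_of_one_le_of_one_le hpair hlat)
      _ = C * (2 * C ^ (d - 1)⁻¹) ^ (2 * q) * 2 ^ N * s ^ (-d₄) * (W * P) := by
          rw [hsplit, Real.mul_rpow zero_le_two hs0.le, ← hpow]; ring
      _ ≤ C * (2 * C ^ (d - 1)⁻¹) ^ (2 * q) * 2 ^ N * K ^ (-d₄) * (W * P) := by
          have hsK : s ^ (-d₄) ≤ K ^ (-d₄) :=
            Real.rpow_le_rpow_of_nonpos (by linarith) hKs (neg_nonpos.2 hd₄)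
          exact mul_le_mul_of_nonneg_right (mul_le_mul_of_nonneg_left hsK (by positivity))
            (by positivity)
  · positivity

end TailSum

lemma exists_tail_exponents {n d τ : ℝ} (hn : 0 ≤ n) (hd : 1 < d)
    (hτ : τ > n + 2 / (d - 1)) :
    ∃ p q d₄ : ℝ, 1 < p ∧ 1 < q ∧ 0 < d₄ ∧ τ = (d - 1)⁻¹ * (2 * q) + n * p + d₄ := by
  set γ : ℝ := τ - n - 2 / (d - 1)
  have hγ : 0 < γ := by linarith
  have hd1 : 0 < d - 1 := by linarith
  set p : ℝ := 1 + γ / (4 * (n + 1))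
  set q : ℝ := 1 + (d - 1) * γ / 4
  refine ⟨p, q, τ - (d - 1)⁻¹ * (2 * q) - n * p, lt_add_of_pos_right 1 (by positivity),
    lt_add_of_pos_right 1 (by positivity), ?_, by ring⟩
  have hnp : n * (γ / (4 * (n + 1))) < γ / 4 := by
    rw [mul_div_assoc', div_lt_div_iff₀ (by positivity) (by norm_num)]; nlinarith
  have hq : (d - 1)⁻¹ * (2 * q) = 2 / (d - 1) + γ / 2 := by
    simp only [q]; field_simp; ring
  rw [hq]
  linarith

theorem stmt_8_general (n : ℕ) (d : ℝ) (hd : 1 < d) (τ : ℝ)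
    (hτ : τ > n + 2 / (d - 1)) (C : ℝ) (hC : 0 < C) :
    ∃ C'' : ℝ, 0 < C'' ∧ ∃ d₄ : ℝ, 0 < d₄ ∧ ∀ K : ℝ, 1 ≤ K →
      (let f : ((Fin n → ℤ) × (ℕ × ℕ)) → ℝ := fun x =>
        let knorm : ℝ := ((∑ l, |x.1 l| : ℤ) : ℝ)
        if K ≤ knorm ∧ 1 ≤ x.2.1 ∧ 1 ≤ x.2.2 ∧ x.2.1 ≠ x.2.2 ∧
            |(x.2.1 : ℝ) ^ d - (x.2.2 : ℝ) ^ d| ≤ C * knorm then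
          |(x.2.1 : ℝ) ^ d - (x.2.2 : ℝ) ^ d| / ((1 + knorm ^ τ) * knorm)
        else 0;
      Summable f ∧ ∑' x, f x ≤ C'' / K ^ d₄) := by
  obtain ⟨p, q, d₄, hp, hq, hd₄, hτpq⟩ := exists_tail_exponents n.cast_nonneg hd hτ
  set B : ℝ := C * (2 * C ^ (d - 1)⁻¹) ^ (2 * q) * 2 ^ ((n : ℝ) * p)
  set T : ℝ := ∑' x, tailWeight (ι := Fin n) p q x
  have hT : 0 ≤ T := tsum_nonneg (tailWeight_nonneg p q)
  refine ⟨B * T + 1, by positivity, d₄, hd₄, fun K hK => ?_⟩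
  intro f
  have hf : ∀ x, f x ≤ B * K ^ (-d₄) * tailWeight p q x := by
    have hle := tailSummand_le (ι := Fin n) (τ := τ) (p := p) (q := q) (d₄ := d₄)
      hd hC hK (by linarith) (by linarith) hd₄.le (by rwa [Fintype.card_fin])
    rwa [Fintype.card_fin] at hle
  have hg := (summable_tailWeight (ι := Fin n) hp hq).mul_left (B * K ^ (-d₄))
  have hfs : Summable f := .of_nonneg_of_le (tailSummand_nonneg (by linarith)) hf hg
  refine ⟨hfs, ?_⟩
  calc ∑' x, f x ≤ ∑' x, B * K ^ (-d₄) * tailWeight p q x := hfs.tsum_le_tsum hf hg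
    _ = B * T / K ^ d₄ := by rw [tsum_mul_left, Real.rpow_neg (by linarith)]; ring
    _ ≤ (B * T + 1) / K ^ d₄ := by gcongr; linarith

/-- Small-divisor tail sum: for `τ > n + 2/(d-1)` there are `C'' > 0`, `d₄ > 0`
(depending only on `n, d, τ, C`) such that for all `K ≥ 1`,
`∑_{|k| ≥ K} ∑_{i≠j, |i^d-j^d| ≤ C|k|} |i^d-j^d| / ((1+|k|^τ)|k|) ≤ C''/K^{d₄}`. -/
theorem stmt_8 (n : ℕ) (hn : 1 ≤ n) (d : ℝ) (hd : 1 < d) (τ : ℝ)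
    (hτ : τ > n + 2 / (d - 1)) (C : ℝ) (hC : 0 < C) :
    ∃ C'' : ℝ, 0 < C'' ∧ ∃ d₄ : ℝ, 0 < d₄ ∧ ∀ K : ℝ, 1 ≤ K →
      (let f : ((Fin n → ℤ) × (ℕ × ℕ)) → ℝ := fun x =>
        let knorm : ℝ := ((∑ l, |x.1 l| : ℤ) : ℝ)
        if K ≤ knorm ∧ 1 ≤ x.2.1 ∧ 1 ≤ x.2.2 ∧ x.2.1 ≠ x.2.2 ∧
            |(x.2.1 : ℝ) ^ d - (x.2.2 : ℝ) ^ d| ≤ C * knorm then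
          |(x.2.1 : ℝ) ^ d - (x.2.2 : ℝ) ^ d| / ((1 + knorm ^ τ) * knorm)
        else 0;
      Summable f ∧ ∑' x, f x ≤ C'' / K ^ d₄) :=
  stmt_8_general n d hd τ hτ C hC
end

section
/- Let $\lambda_i, \lambda_j$ be real numbers with $|\lambda_i - \lambda_j| \geq C_\lambda |i^d - j^d|$ for distinct positive integers $i, j$, let $\omega \in [0,1]^n$, $k \in \mathbb{Z}^n$, and suppose the Diophantine condition $|\lambda_i - \lambda_j + \omega \cdot k| \geq \gamma |i^d - j^d|/(1 + |k|^\tau)$ holds. Let $\lambda_i', \lambda_j'$ satisfy $|\lambda_i' - \lambda_i| \leq \varepsilon i^\delta$ and $|\lambda_j' - \lambda_j| \leq \varepsilon j^\delta$ with $0 \leq \delta$, and suppose $|i^d - j^d| \geq i^\delta + j^\delta$. Then for all $k$ with $|k| \leq K$, $|\lambda_i' - \lambda_j' + \omega \cdot k| \geq \frac{\gamma - \varepsilon(1 + K^\tau)}{1 + |k|^\tau} |i^d - j^d|$. -/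
open Finset

/-! The perturbed divisor differs from the unperturbed one by at most
`ε (i^δ + j^δ) ≤ ε |i^d - j^d|`, and this loss is absorbed into the Diophantine constant
because `1 + |k|^τ ≤ 1 + K^τ`. -/

lemma abs_sub_add_le_abs_sub_add_add_abs_sub (a b a' b' s : ℝ) :
    |a - b + s| ≤ |a' - b' + s| + |a' - a| + |b' - b| := by
  calc |a - b + s| = |(a' - b' + s) + (a - a') + (b' - b)| := by ring_nf
    _ ≤ |a' - b' + s| + |a - a'| + |b' - b| := abs_add_three _ _ _
    _ = |a' - b' + s| + |a' - a| + |b' - b| := by rw [abs_sub_comm a]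

lemma sub_mul_div_mul_le_div_sub {γ ε D w W : ℝ} (hε : 0 ≤ ε) (hD : 0 ≤ D) (hw : 0 < w)
    (hwW : w ≤ W) : (γ - ε * W) / w * D ≤ γ * D / w - ε * D := by
  have hW : ε * D ≤ ε * D * (W / w) :=
    le_mul_of_one_le_right (mul_nonneg hε hD) ((one_le_div hw).mpr hwW)
  calc (γ - ε * W) / w * D = γ * D / w - ε * D * (W / w) := by field_simp
    _ ≤ γ * D / w - ε * D := by linarith

theorem stmt_11_general (n : ℕ) (d τ δ γ ε K : ℝ) (hτ : 0 < τ) (hε : 0 ≤ ε)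
    (i j : ℕ)
    (lami lamj lami' lamj' : ℝ)
    (ω : Fin n → ℝ) (k : Fin n → ℤ)
    (hdio : |lami - lamj + ∑ l, ω l * (k l : ℝ)| ≥
      γ * |(i : ℝ) ^ d - (j : ℝ) ^ d| / (1 + ((∑ l, |k l| : ℤ) : ℝ) ^ τ))
    (hi' : |lami' - lami| ≤ ε * (i : ℝ) ^ δ) (hj' : |lamj' - lamj| ≤ ε * (j : ℝ) ^ δ)
    (hpow : |(i : ℝ) ^ d - (j : ℝ) ^ d| ≥ (i : ℝ) ^ δ + (j : ℝ) ^ δ)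
    (hkK : ((∑ l, |k l| : ℤ) : ℝ) ≤ K) :
    |lami' - lamj' + ∑ l, ω l * (k l : ℝ)| ≥
      (γ - ε * (1 + K ^ τ)) / (1 + ((∑ l, |k l| : ℤ) : ℝ) ^ τ) *
        |(i : ℝ) ^ d - (j : ℝ) ^ d| := by
  set D := |(i : ℝ) ^ d - (j : ℝ) ^ d|
  set M : ℝ := ((∑ l, |k l| : ℤ) : ℝ)
  have hM : 0 ≤ M := Int.cast_nonneg (sum_nonneg fun l _ => abs_nonneg (k l))
  have hw : 0 < 1 + M ^ τ := by positivity
  have hwW : 1 + M ^ τ ≤ 1 + K ^ τ := by gcongr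
  have hloss : ε * ((i : ℝ) ^ δ + (j : ℝ) ^ δ) ≤ ε * D := mul_le_mul_of_nonneg_left hpow hε
  have hpert :=
    abs_sub_add_le_abs_sub_add_add_abs_sub lami lamj lami' lamj' (∑ l, ω l * (k l : ℝ))
  calc (γ - ε * (1 + K ^ τ)) / (1 + M ^ τ) * D
      ≤ γ * D / (1 + M ^ τ) - ε * D := sub_mul_div_mul_le_div_sub hε (abs_nonneg _) hw hwW
    _ ≤ |lami' - lamj' + ∑ l, ω l * (k l : ℝ)| := by linarith

/-- Persistence of the Diophantine condition under a perturbation of the eigenvalues of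
size `ε i^δ`: the small-divisor estimate holds with `γ` replaced by `γ - ε(1+K^τ)` for
`|k| ≤ K`. -/
theorem stmt_11 (n : ℕ) (d τ δ γ ε Clam K : ℝ) (hd : 1 < d) (hτ : 0 < τ) (hδ : 0 ≤ δ)
    (hγ : 0 < γ) (hε : 0 ≤ ε) (hClam : 0 < Clam) (hK : 0 ≤ K)
    (i j : ℕ) (hi : 1 ≤ i) (hj : 1 ≤ j) (hij : i ≠ j)
    (lami lamj lami' lamj' : ℝ)
    (hgap : |lami - lamj| ≥ Clam * |(i : ℝ) ^ d - (j : ℝ) ^ d|)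
    (ω : Fin n → ℝ) (hω : ∀ l, ω l ∈ Set.Icc (0:ℝ) 1) (k : Fin n → ℤ)
    (hdio : |lami - lamj + ∑ l, ω l * (k l : ℝ)| ≥
      γ * |(i : ℝ) ^ d - (j : ℝ) ^ d| / (1 + ((∑ l, |k l| : ℤ) : ℝ) ^ τ))
    (hi' : |lami' - lami| ≤ ε * (i : ℝ) ^ δ) (hj' : |lamj' - lamj| ≤ ε * (j : ℝ) ^ δ)
    (hpow : |(i : ℝ) ^ d - (j : ℝ) ^ d| ≥ (i : ℝ) ^ δ + (j : ℝ) ^ δ)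
    (hkK : ((∑ l, |k l| : ℤ) : ℝ) ≤ K) :
    |lami' - lamj' + ∑ l, ω l * (k l : ℝ)| ≥
      (γ - ε * (1 + K ^ τ)) / (1 + ((∑ l, |k l| : ℤ) : ℝ) ^ τ) *
        |(i : ℝ) ^ d - (j : ℝ) ^ d| :=
  stmt_11_general n d τ δ γ ε K hτ hε i j lami lamj lami' lamj' ω k hdio hi' hj' hpow hkK
end

section
/- Let $\epsilon \in (0,1)$ and define $\epsilon_l := \epsilon^{(4/3)^l}$ for $l \geq 0$. Then $\sum_{l=0}^\infty \epsilon_l < \infty$, and moreover for any $c > 0$ and $b > 0$ there exists $\epsilon_* > 0$ such that for all $0 < \epsilon < \epsilon_*$ and all $l \geq 0$, $\epsilon_l^2 \exp\big(c \, (4 l^2 / s)^{b}\big) \leq \epsilon_{l+1}$, where $s > 0$ is fixed. -/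
/-!
Writing `t = (4/3)^l`, the target inequality reads `exp (2 t log ε + a_l) ≤ exp ((4/3) t log ε)`
with `a_l = c (4 l² / s)^b`, i.e. `a_l ≤ -(2/3) t log ε`. Since `a_l` grows only polynomially in
`l` it is at most `K (4/3)^l` for some constant `K`, so `log ε ≤ -(3/2) K` suffices.
Summability holds because `(4/3)^l ≥ l/3` makes `ε^((4/3)^l)` dominated by a geometric series.
-/

open Filter Topology

lemma summable_rpow_pow {ε q : ℝ} (hε : 0 < ε) (hε1 : ε < 1) (hq : 1 < q) :
    Summable fun l : ℕ => ε ^ (q ^ l) := by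
  have hratio_lt : ε ^ (q - 1) < 1 := Real.rpow_lt_one hε.le hε1 (by linarith)
  refine Summable.of_nonneg_of_le (fun l => by positivity) (fun l => ?_)
    (summable_geometric_of_lt_one (by positivity) hratio_lt)
  have hbernoulli : (q - 1) * l ≤ q ^ l := by
    have := one_add_mul_le_pow (a := q - 1) (by linarith) l
    rw [add_sub_cancel] at this
    linarith
  calc ε ^ (q ^ l) ≤ ε ^ ((q - 1) * l) := Real.rpow_le_rpow_of_exponent_ge hε hε1.le hbernoulli
    _ = (ε ^ (q - 1)) ^ l := by rw [Real.rpow_mul hε.le, Real.rpow_natCast]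

lemma exists_rpow_le_mul_pow (b : ℝ) {q : ℝ} (hq : 1 < q) :
    ∃ M, ∀ l : ℕ, (l : ℝ) ^ b ≤ M * q ^ l := by
  have hq0 : 0 < q := by linarith
  have hratio : Tendsto (fun l : ℕ => (l : ℝ) ^ b / q ^ l) atTop (𝓝 0) := by
    refine ((tendsto_rpow_mul_exp_neg_mul_atTop_nhds_zero b _ (Real.log_pos hq)).comp
      tendsto_natCast_atTop_atTop).congr fun l => ?_
    rw [Function.comp_apply, neg_mul, Real.exp_neg, Real.exp_mul, Real.exp_log hq0,
      Real.rpow_natCast, div_eq_mul_inv, mul_comm]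
  obtain ⟨M, hM⟩ := hratio.bddAbove_range
  exact ⟨M, fun l => (div_le_iff₀ (by positivity)).1 (hM ⟨l, rfl⟩)⟩

lemma exists_mul_sq_rpow_le_mul_pow {A : ℝ} (hA : 0 ≤ A) (b : ℝ) {q : ℝ} (hq : 1 < q) :
    ∃ K, ∀ l : ℕ, (A * (l : ℝ) ^ 2) ^ b ≤ K * q ^ l := by
  obtain ⟨M, hM⟩ := exists_rpow_le_mul_pow (2 * b) hq
  refine ⟨A ^ b * M, fun l => ?_⟩
  calc (A * (l : ℝ) ^ 2) ^ b = A ^ b * (l : ℝ) ^ (2 * b) := by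
        rw [Real.mul_rpow hA (by positivity), Real.rpow_mul (Nat.cast_nonneg l), Real.rpow_two]
    _ ≤ A ^ b * (M * q ^ l) := by gcongr; exact hM l
    _ = A ^ b * M * q ^ l := by ring

lemma rpow_sq_mul_exp_le_rpow_mul {ε q K t a : ℝ} (hε : 0 < ε) (hq : q < 2) (ht : 0 ≤ t)
    (hεK : ε ≤ Real.exp (-K / (2 - q))) (ha : a ≤ K * t) :
    (ε ^ t) ^ 2 * Real.exp a ≤ ε ^ (q * t) := by
  have hlog : Real.log ε * (2 - q) ≤ -K := by
    rw [← le_div_iff₀ (by linarith), Real.log_le_iff_le_exp hε]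
    exact hεK
  rw [Real.rpow_def_of_pos hε, Real.rpow_def_of_pos hε, ← Real.exp_nat_mul, ← Real.exp_add]
  gcongr
  push_cast
  nlinarith

theorem stmt_16_general (s c b : ℝ) (hs : 0 < s) (hc : 0 < c) :
    (∀ ε : ℝ, 0 < ε → ε < 1 → Summable (fun l : ℕ => ε ^ ((4 / 3 : ℝ) ^ l))) ∧
    ∃ εstar : ℝ, 0 < εstar ∧ ∀ ε : ℝ, 0 < ε → ε < εstar → ∀ l : ℕ,
      (ε ^ ((4 / 3 : ℝ) ^ l)) ^ 2 * Real.exp (c * (4 * (l : ℝ) ^ 2 / s) ^ b) ≤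
        ε ^ ((4 / 3 : ℝ) ^ (l + 1)) := by
  refine ⟨fun ε hε hε1 => summable_rpow_pow hε hε1 (by norm_num), ?_⟩
  obtain ⟨K, hK⟩ := exists_mul_sq_rpow_le_mul_pow (A := 4 / s) (by positivity) b
    (q := 4 / 3) (by norm_num)
  refine ⟨Real.exp (-(c * K) / (2 - 4 / 3)), Real.exp_pos _, fun ε hε hεstar l => ?_⟩
  have hexponent : c * (4 * (l : ℝ) ^ 2 / s) ^ b ≤ c * K * (4 / 3) ^ l := by
    rw [mul_div_right_comm, mul_assoc]
    exact mul_le_mul_of_nonneg_left (hK l) hc.le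
  rw [pow_succ' (4 / 3 : ℝ)]
  exact rpow_sq_mul_exp_le_rpow_mul hε (by norm_num) (by positivity) hεstar.le hexponent

/-- Superexponential convergence of the KAM iteration: `ε_l := ε^{(4/3)^l}` is summable
for `ε ∈ (0,1)`, and for any `c, b, s > 0` there is `ε_* > 0` such that for `ε < ε_*`
the recursion inequality `ε_l² exp(c (4l²/s)^b) ≤ ε_{l+1}` holds for all `l`. -/
theorem stmt_16 (s c b : ℝ) (hs : 0 < s) (hc : 0 < c) (hb : 0 < b) :
    (∀ ε : ℝ, 0 < ε → ε < 1 → Summable (fun l : ℕ => ε ^ ((4 / 3 : ℝ) ^ l))) ∧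
    ∃ εstar : ℝ, 0 < εstar ∧ ∀ ε : ℝ, 0 < ε → ε < εstar → ∀ l : ℕ,
      (ε ^ ((4 / 3 : ℝ) ^ l)) ^ 2 * Real.exp (c * (4 * (l : ℝ) ^ 2 / s) ^ b) ≤
        ε ^ ((4 / 3 : ℝ) ^ (l + 1)) :=
  stmt_16_general s c b hs hc
end
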